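/- Let X ⊆ ℝ^{d_x} be a Borel set carrying a probability measure π₀, let E ⊆ ℝ^{d_e} be a Borel latent space, and let Θ ⊆ ℝ^{p} be a convex set. Let g₀ : X × E → ℝ^{k₀} and g̃ : X × E → ℝ^{d_C} be bounded measurable and A : X → ℝ^{p × d_C} be bounded measurable, and for θ ∈ Θ define g(x, e; θ) = (g₀(x,e)ᵀ, (g̃(x,e) − A(x)ᵀθ)ᵀ)ᵀ. Define the identified set Θ₀ = {θ ∈ Θ : there exists a sequence of Markov kernels μ_k from X to E with ‖∫_X ∫_E g(x,e;θ) dμ_k(e|x) dπ₀(x)‖ → 0 as k → ∞}. Then Θ₀ is convex. -/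

import Mathlib

/-!
For a Markov kernel κ, the moment vector at θ is the image under a continuous linear map
`stackMoment θ` of the mean `m(κ)` of `((g₀, g̃), A)` under `x ∼ π₀, e ∼ κ x`, and the `A`-part of
`m(κ)` is `∫ A dπ₀` for every κ. The mixture `a κ + b η` of kernels has mean `a m(κ) + b m(η)`,
and because θ only meets the common term `∫ A dπ₀`, its moment at `a θ₁ + b θ₂` is
`a • (moment of κ at θ₁) + b • (moment of η at θ₂)`, which tends to `0` along the two sequences.
-/

open MeasureTheory ProbabilityTheory Filter Topology

noncomputable section

/-- The stacked moment g(x,e;θ) = (g₀(x,e)ᵀ, (g̃(x,e) − A(x)ᵀθ)ᵀ)ᵀ ∈ ℝ^{k₀ + d_C}. -/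
def gStack {k₀ dC p : ℕ} {X E : Type*}
    (g₀ : X → E → EuclideanSpace ℝ (Fin k₀))
    (gt : X → E → EuclideanSpace ℝ (Fin dC))
    (A : X → Matrix (Fin p) (Fin dC) ℝ)
    (θ : EuclideanSpace ℝ (Fin p)) (x : X) (e : E) :
    EuclideanSpace ℝ (Fin (k₀ + dC)) :=
  (WithLp.equiv 2 (Fin (k₀ + dC) → ℝ)).symm
    (Fin.append (fun i => g₀ x e i) (fun j => gt x e j - ∑ i, A x i j * θ i))

open scoped ENNReal

namespace ProbabilityTheory.Kernel

variable {α β : Type*} [MeasurableSpace α] [MeasurableSpace β]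

def mix (a b : ℝ≥0∞) (κ η : Kernel α β) : Kernel α β where
  toFun x := a • κ x + b • η x
  measurable' := by
    refine Measure.measurable_of_measurable_coe _ fun s hs => ?_
    simp only [Measure.coe_add, Measure.coe_smul, Pi.add_apply, Pi.smul_apply, smul_eq_mul]
    exact (measurable_const.mul (κ.measurable_coe hs)).add
      (measurable_const.mul (η.measurable_coe hs))

lemma mix_apply (a b : ℝ≥0∞) (κ η : Kernel α β) (x : α) : mix a b κ η x = a • κ x + b • η x :=
  rfl

lemma isMarkovKernel_mix {a b : ℝ≥0∞} (hab : a + b = 1) (κ η : Kernel α β) [IsMarkovKernel κ]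
    [IsMarkovKernel η] : IsMarkovKernel (mix a b κ η) :=
  ⟨fun x => ⟨by simp [mix_apply, hab]⟩⟩

end ProbabilityTheory.Kernel

open ProbabilityTheory.Kernel

section KernelIntegral

variable {X E V W : Type*} [MeasurableSpace X] [MeasurableSpace E]
  [NormedAddCommGroup V] {π : Measure X} {κ η : Kernel X E} {f : X → E → V} {C : ℝ}

lemma integrable_of_stronglyMeasurable_uncurry_of_norm_le {ν : Measure E} [IsFiniteMeasure ν]
    (hf : StronglyMeasurable (Function.uncurry f)) (hC : ∀ x e, ‖f x e‖ ≤ C) (x : X) :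
    Integrable (f x) ν :=
  .of_bound (hf.comp_measurable measurable_prodMk_left).aestronglyMeasurable C
    (ae_of_all _ (hC x))

lemma integrable_integral_kernel_of_norm_le [NormedSpace ℝ V] [IsFiniteMeasure π]
    [IsMarkovKernel κ]
    (hf : StronglyMeasurable (Function.uncurry f)) (hC : ∀ x e, ‖f x e‖ ≤ C) :
    Integrable (fun x => ∫ e, f x e ∂κ x) π :=
  .of_bound hf.integral_kernel_prod_right'.aestronglyMeasurable C <| ae_of_all _ fun x => by
    simpa using norm_integral_le_of_norm_le_const (μ := κ x) (ae_of_all _ (hC x))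

lemma integral_integral_comp_clm [NormedSpace ℝ V] [CompleteSpace V] [NormedAddCommGroup W]
    [NormedSpace ℝ W] [CompleteSpace W] [IsFiniteMeasure π] [IsMarkovKernel κ]
    (hf : StronglyMeasurable (Function.uncurry f)) (hC : ∀ x e, ‖f x e‖ ≤ C) (L : V →L[ℝ] W) :
    ∫ x, ∫ e, L (f x e) ∂κ x ∂π = L (∫ x, ∫ e, f x e ∂κ x ∂π) := by
  simp_rw [L.integral_comp_comm (integrable_of_stronglyMeasurable_uncurry_of_norm_le hf hC _)]
  exact L.integral_comp_comm (integrable_integral_kernel_of_norm_le hf hC)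

lemma integral_integral_mix [NormedSpace ℝ V] [IsFiniteMeasure π] [IsMarkovKernel κ]
    [IsMarkovKernel η] {a b : ℝ≥0∞} (ha : a ≠ ∞) (hb : b ≠ ∞)
    (hf : StronglyMeasurable (Function.uncurry f)) (hC : ∀ x e, ‖f x e‖ ≤ C) :
    ∫ x, ∫ e, f x e ∂mix a b κ η x ∂π
      = a.toReal • ∫ x, ∫ e, f x e ∂κ x ∂π + b.toReal • ∫ x, ∫ e, f x e ∂η x ∂π := by
  have hint (ν : Measure E) [IsFiniteMeasure ν] (x : X) : Integrable (f x) ν :=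
    integrable_of_stronglyMeasurable_uncurry_of_norm_le hf hC x
  simp_rw [mix_apply, integral_add_measure ((hint _ _).smul_measure ha)
    ((hint _ _).smul_measure hb), integral_smul_measure]
  rw [integral_add, integral_smul, integral_smul] <;>
    exact Integrable.smul _ (integrable_integral_kernel_of_norm_le hf hC)

end KernelIntegral

section Moments

variable {X E : Type*} {k₀ dC p : ℕ} {g₀ : X → E → EuclideanSpace ℝ (Fin k₀)}
  {gt : X → E → EuclideanSpace ℝ (Fin dC)} {A : X → Matrix (Fin p) (Fin dC) ℝ}

-- `A x` is recorded as a plain function `Fin p → Fin dC → ℝ`: unlike `Matrix`, it carries the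
-- sup norm and the Borel σ-algebra.
def momentData (g₀ : X → E → EuclideanSpace ℝ (Fin k₀)) (gt : X → E → EuclideanSpace ℝ (Fin dC))
    (A : X → Matrix (Fin p) (Fin dC) ℝ) (x : X) (e : E) :
    (EuclideanSpace ℝ (Fin k₀) × EuclideanSpace ℝ (Fin dC)) × (Fin p → Fin dC → ℝ) :=
  ((g₀ x e, gt x e), fun i j => A x i j)

lemma norm_momentData_le {C₀ C₁ C₂ : ℝ} (hC₀ : ∀ x e, ‖g₀ x e‖ ≤ C₀)
    (hC₁ : ∀ x e, ‖gt x e‖ ≤ C₁) (hC₂ : ∀ x i j, |A x i j| ≤ C₂) (x : X) (e : E) :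
    ‖momentData g₀ gt A x e‖ ≤ max (max C₀ C₁) |C₂| := by
  have hA : ‖fun i j => A x i j‖ ≤ |C₂| :=
    (pi_norm_le_iff_of_nonneg (abs_nonneg _)).2 fun i =>
      (pi_norm_le_iff_of_nonneg (abs_nonneg _)).2 fun j => (hC₂ x i j).trans (le_abs_self _)
  exact norm_prod_le_iff.2 ⟨(norm_prod_le_iff.2 ⟨(hC₀ x e).trans (le_max_left _ _),
    (hC₁ x e).trans (le_max_right _ _)⟩).trans (le_max_left _ _), hA.trans (le_max_right _ _)⟩

def stackMoment (θ : EuclideanSpace ℝ (Fin p)) :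
    (EuclideanSpace ℝ (Fin k₀) × EuclideanSpace ℝ (Fin dC)) × (Fin p → Fin dC → ℝ)
      →L[ℝ] EuclideanSpace ℝ (Fin (k₀ + dC)) :=
  LinearMap.toContinuousLinearMap
    { toFun := fun w => (WithLp.equiv 2 (Fin (k₀ + dC) → ℝ)).symm
        (Fin.append (fun i => w.1.1 i) (fun j => w.1.2 j - ∑ i, w.2 i j * θ i))
      map_add' := fun v w => by
        ext j
        induction j using Fin.addCases <;>
          simp [Fin.append_left, Fin.append_right, add_mul, Finset.sum_add_distrib]; ring
      map_smul' := fun c w => by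
        ext j
        induction j using Fin.addCases <;>
          simp [Fin.append_left, Fin.append_right, mul_sub, Finset.mul_sum, mul_assoc] }

lemma gStack_eq_stackMoment (θ : EuclideanSpace ℝ (Fin p)) (x : X) (e : E) :
    gStack g₀ gt A θ x e = stackMoment θ (momentData g₀ gt A x e) :=
  rfl

-- `v - Mᵀθ` is bilinear in `(M, θ)`, so this needs the two matrix components to agree.
lemma stackMoment_convexComb {θ₁ θ₂ : EuclideanSpace ℝ (Fin p)}
    {w₁ w₂ : (EuclideanSpace ℝ (Fin k₀) × EuclideanSpace ℝ (Fin dC)) × (Fin p → Fin dC → ℝ)}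
    (hw : w₁.2 = w₂.2) {a b : ℝ} (hab : a + b = 1) :
    stackMoment (a • θ₁ + b • θ₂) (a • w₁ + b • w₂)
      = a • stackMoment θ₁ w₁ + b • stackMoment θ₂ w₂ := by
  obtain ⟨w₁, M⟩ := w₁
  obtain ⟨w₂, M'⟩ := w₂
  obtain rfl : M = M' := hw
  ext j
  induction j using Fin.addCases with
  | left i => simp [stackMoment, Fin.append_left]
  | right j =>
    simp only [stackMoment, LinearMap.coe_toContinuousLinearMap', LinearMap.coe_mk,
      AddHom.coe_mk, WithLp.equiv_symm_apply, PiLp.toLp_apply, Fin.append_right, PiLp.add_apply,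
      PiLp.smul_apply, Prod.smul_mk, Prod.mk_add_mk, Prod.snd_add, Prod.smul_snd, Pi.add_apply,
      Pi.smul_apply, smul_eq_mul]
    simp_rw [← add_mul, hab, one_mul, mul_add, Finset.sum_add_distrib, mul_left_comm _ a,
      mul_left_comm _ b, ← Finset.mul_sum]
    ring

variable [MeasurableSpace X] [MeasurableSpace E] {π : Measure X} [IsFiniteMeasure π]
  {κ η : Kernel X E} {C : ℝ}

lemma integral_integral_gStack [IsMarkovKernel κ]
    (hφ : StronglyMeasurable (Function.uncurry (momentData g₀ gt A)))
    (hφC : ∀ x e, ‖momentData g₀ gt A x e‖ ≤ C) (θ : EuclideanSpace ℝ (Fin p)) :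
    ∫ x, ∫ e, gStack g₀ gt A θ x e ∂κ x ∂π
      = stackMoment θ (∫ x, ∫ e, momentData g₀ gt A x e ∂κ x ∂π) := by
  simp_rw [gStack_eq_stackMoment]
  exact integral_integral_comp_clm hφ hφC _

lemma snd_integral_integral_momentData [IsMarkovKernel κ]
    (hφ : StronglyMeasurable (Function.uncurry (momentData g₀ gt A)))
    (hφC : ∀ x e, ‖momentData g₀ gt A x e‖ ≤ C) :
    (∫ x, ∫ e, momentData g₀ gt A x e ∂κ x ∂π).2 = ∫ x, (fun i j => A x i j) ∂π := by
  rw [← ContinuousLinearMap.coe_snd' (R := ℝ), ← integral_integral_comp_clm hφ hφC]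
  simp [momentData]

lemma integral_integral_gStack_mix [IsMarkovKernel κ] [IsMarkovKernel η]
    (hφ : StronglyMeasurable (Function.uncurry (momentData g₀ gt A)))
    (hφC : ∀ x e, ‖momentData g₀ gt A x e‖ ≤ C) {a b : ℝ} (ha : 0 ≤ a) (hb : 0 ≤ b)
    (hab : a + b = 1) (θ₁ θ₂ : EuclideanSpace ℝ (Fin p)) :
    ∫ x, ∫ e, gStack g₀ gt A (a • θ₁ + b • θ₂) x e ∂mix (.ofReal a) (.ofReal b) κ η x ∂π
      = a • ∫ x, ∫ e, gStack g₀ gt A θ₁ x e ∂κ x ∂π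
        + b • ∫ x, ∫ e, gStack g₀ gt A θ₂ x e ∂η x ∂π := by
  have : IsMarkovKernel (mix (.ofReal a) (.ofReal b) κ η) :=
    isMarkovKernel_mix (by rw [← ENNReal.ofReal_add ha hb, hab, ENNReal.ofReal_one]) κ η
  rw [integral_integral_gStack hφ hφC, integral_integral_gStack hφ hφC,
    integral_integral_gStack hφ hφC,
    integral_integral_mix ENNReal.ofReal_ne_top ENNReal.ofReal_ne_top hφ hφC,
    ENNReal.toReal_ofReal ha, ENNReal.toReal_ofReal hb, stackMoment_convexComb _ hab]
  rw [snd_integral_integral_momentData hφ hφC, snd_integral_integral_momentData hφ hφC]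

end Moments

theorem stmt_12_general {dx de p k₀ dC : ℕ}
    (X : Set (EuclideanSpace ℝ (Fin dx)))
    (E : Set (EuclideanSpace ℝ (Fin de)))
    (π₀ : Measure ↥X) [IsProbabilityMeasure π₀]
    (Θ : Set (EuclideanSpace ℝ (Fin p))) (hΘ : Convex ℝ Θ)
    (g₀ : ↥X → ↥E → EuclideanSpace ℝ (Fin k₀))
    (hg₀meas : Measurable (Function.uncurry g₀)) (hg₀bdd : ∃ C : ℝ, ∀ x e, ‖g₀ x e‖ ≤ C)
    (gt : ↥X → ↥E → EuclideanSpace ℝ (Fin dC))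
    (hgtmeas : Measurable (Function.uncurry gt)) (hgtbdd : ∃ C : ℝ, ∀ x e, ‖gt x e‖ ≤ C)
    (A : ↥X → Matrix (Fin p) (Fin dC) ℝ)
    (hAmeas : Measurable (fun x i j => A x i j : ↥X → Fin p → Fin dC → ℝ)) (hAbdd : ∃ C : ℝ, ∀ x i j, |A x i j| ≤ C) :
    Convex ℝ {θ ∈ Θ | ∃ μ : ℕ → Kernel ↥X ↥E, (∀ k, IsMarkovKernel (μ k)) ∧
        Tendsto (fun k => ‖∫ x, ∫ e, gStack g₀ gt A θ x e ∂((μ k) x) ∂π₀‖)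
          atTop (𝓝 0)} := by
  obtain ⟨C₀, hC₀⟩ := hg₀bdd
  obtain ⟨C₁, hC₁⟩ := hgtbdd
  obtain ⟨C₂, hC₂⟩ := hAbdd
  have hφ : StronglyMeasurable (Function.uncurry (momentData g₀ gt A)) :=
    ((hg₀meas.prodMk hgtmeas).prodMk (hAmeas.comp measurable_fst)).stronglyMeasurable
  have hφC := norm_momentData_le hC₀ hC₁ hC₂
  rintro θ₁ ⟨hθ₁, κ, hκ, hκ0⟩ θ₂ ⟨hθ₂, η, hη, hη0⟩ a b ha hb hab
  have hab' : ENNReal.ofReal a + ENNReal.ofReal b = 1 := by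
    rw [← ENNReal.ofReal_add ha hb, hab, ENNReal.ofReal_one]
  refine ⟨hΘ hθ₁ hθ₂ ha hb hab, fun k => mix (.ofReal a) (.ofReal b) (κ k) (η k),
    fun k => have := hκ k; have := hη k; isMarkovKernel_mix hab' _ _, ?_⟩
  have hsplit (k : ℕ) := by
    have := hκ k
    have := hη k
    exact integral_integral_gStack_mix (π := π₀) (κ := κ k) (η := η k) hφ hφC ha hb hab θ₁ θ₂
  simp_rw [hsplit]
  have hu := tendsto_zero_iff_norm_tendsto_zero.2 hκ0
  have hv := tendsto_zero_iff_norm_tendsto_zero.2 hη0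
  simpa using ((hu.const_smul a).add (hv.const_smul b)).norm

/-- the identified set
Θ₀ = {θ ∈ Θ : ∃ Markov kernels μ_k with ‖∫∫ g(x,e;θ) dμ_k dπ₀‖ → 0}
is convex whenever Θ is convex and the counterfactual moment is additively separable and
affine in θ. -/
theorem stmt_12 {dx de p k₀ dC : ℕ}
    (X : Set (EuclideanSpace ℝ (Fin dx))) (hX : MeasurableSet X)
    (E : Set (EuclideanSpace ℝ (Fin de))) (hE : MeasurableSet E)
    (π₀ : Measure ↥X) [IsProbabilityMeasure π₀]
    (Θ : Set (EuclideanSpace ℝ (Fin p))) (hΘ : Convex ℝ Θ)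
    (g₀ : ↥X → ↥E → EuclideanSpace ℝ (Fin k₀))
    (hg₀meas : Measurable (Function.uncurry g₀)) (hg₀bdd : ∃ C : ℝ, ∀ x e, ‖g₀ x e‖ ≤ C)
    (gt : ↥X → ↥E → EuclideanSpace ℝ (Fin dC))
    (hgtmeas : Measurable (Function.uncurry gt)) (hgtbdd : ∃ C : ℝ, ∀ x e, ‖gt x e‖ ≤ C)
    (A : ↥X → Matrix (Fin p) (Fin dC) ℝ)
    (hAmeas : Measurable (fun x i j => A x i j : ↥X → Fin p → Fin dC → ℝ)) (hAbdd : ∃ C : ℝ, ∀ x i j, |A x i j| ≤ C) :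
    Convex ℝ {θ ∈ Θ | ∃ μ : ℕ → Kernel ↥X ↥E, (∀ k, IsMarkovKernel (μ k)) ∧
        Tendsto (fun k => ‖∫ x, ∫ e, gStack g₀ gt A θ x e ∂((μ k) x) ∂π₀‖)
          atTop (𝓝 0)} :=
  stmt_12_general X E π₀ Θ hΘ g₀ hg₀meas hg₀bdd gt hgtmeas hgtbdd A hAmeas hAbdd

end
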